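/- arXiv:2302.14302 — 2 statements merged into one kernel-verified Lean document; each statement's English description precedes it below -/
import Mathlib

section
/- For a bounded loss ℓ(θ, ·) and distribution P_z on a latent space with compact support, the supremum over distributions P' within W_∞-distance ε_z of P_z of E_{z'∼P'}[ℓ(θ, g^{-1}(z'))] equals E_{z∼P_z}[ sup_{‖δ_z‖_∞ ≤ ε_z} ℓ(θ, g^{-1}(z + δ_z)) ]. -/
open MeasureTheory ENNReal NNReal

/-- The ∞-Wasserstein distance: infimum over couplings of the essential
supremum of the (ℓ∞) distance. -/
noncomputable def Winf {E : Type*} [MeasurableSpace E] [NormedAddCommGroup E]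
    (P Q : Measure E) : ℝ≥0∞ :=
  ⨅ (π : Measure (E × E)) (_ : π.map Prod.fst = P ∧ π.map Prod.snd = Q),
    essSup (fun p => (‖p.1 - p.2‖₊ : ℝ≥0∞)) π

/-! Write `φ_r z` for the supremum of the loss over the closed `r`-ball around `z`.

Upper bound: `W_∞` is an infimum that need not be attained, but for every `η > 0` some coupling
moves almost every point by less than `ε + η`, whence `E_{P'} ℓ ≤ E_{P_z} φ_{ε+η}`. Uniform
continuity of the loss on compact balls gives `φ_r z → φ_ε z` as `r ↓ ε`, and dominated
convergence lets `η → 0`.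

Lower bound: `φ_ε` is the supremum over a dense sequence of perturbations, so choosing the first
index that comes within `η` of it is a measurable transport map `T` with `‖T z - z‖ ≤ ε`, and the
push-forward of `P_z` by `T` is within `W_∞`-distance `ε` of `P_z`. -/

open Metric Set Filter Topology BoundedContinuousFunction

section PerturbedSup

variable {E : Type*} [NormedAddCommGroup E]

noncomputable def perturbedSup (f : E → ℝ) (ε : ℝ) (z : E) : ℝ :=
  ⨆ δ : closedBall (0 : E) ε, f (z + δ)

lemma perturbedSup_eq_sSup (f : E → ℝ) (ε : ℝ) (z : E) :
    perturbedSup f ε z = sSup {r | ∃ δ : E, ‖δ‖ ≤ ε ∧ r = f (z + δ)} := by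
  rw [perturbedSup, ← sSup_range]
  congr 1
  ext r
  simp [eq_comm]

variable (f : E →ᵇ ℝ) {ε ε' : ℝ} {z δ : E}

lemma le_perturbedSup (hδ : ‖δ‖ ≤ ε) : f (z + δ) ≤ perturbedSup f ε z := by
  refine le_ciSup (f := fun δ : closedBall (0 : E) ε => f (z + δ)) ⟨‖f‖, ?_⟩
    ⟨δ, mem_closedBall_zero_iff.2 hδ⟩
  rintro _ ⟨δ, rfl⟩
  exact (Real.le_norm_self _).trans (f.norm_coe_le_norm _)

lemma perturbedSup_le_norm : perturbedSup f ε z ≤ ‖f‖ :=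
  Real.iSup_le (fun _ => (Real.le_norm_self _).trans (f.norm_coe_le_norm _)) (norm_nonneg f)

lemma abs_perturbedSup_le (hε : 0 ≤ ε) : |perturbedSup f ε z| ≤ ‖f‖ := by
  refine abs_le.2 ⟨?_, perturbedSup_le_norm f⟩
  calc -‖f‖ ≤ f z := neg_le_of_abs_le (f.norm_coe_le_norm z)
    _ = f (z + 0) := by rw [add_zero]
    _ ≤ perturbedSup f ε z := le_perturbedSup f (by simpa using hε)

lemma perturbedSup_mono (hε : 0 ≤ ε) (h : ε ≤ ε') : perturbedSup f ε z ≤ perturbedSup f ε' z :=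
  have : Nonempty (closedBall (0 : E) ε) := ⟨⟨0, mem_closedBall_self hε⟩⟩
  ciSup_le fun δ => le_perturbedSup f ((mem_closedBall_zero_iff.1 δ.2).trans h)

end PerturbedSup

section Measurability

variable {E : Type*} [NormedAddCommGroup E] [SecondCountableTopology E] {f : E → ℝ} {ε : ℝ}

lemma exists_seq_perturbedSup_eq_iSup (hf : Continuous f) (hε : 0 ≤ ε) :
    ∃ e : ℕ → E, (∀ n, ‖e n‖ ≤ ε) ∧ ∀ z, perturbedSup f ε z = ⨆ n, f (z + e n) := by
  have : Nonempty (closedBall (0 : E) ε) := ⟨⟨0, mem_closedBall_self hε⟩⟩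
  obtain ⟨u, hu⟩ := TopologicalSpace.exists_dense_seq (closedBall (0 : E) ε)
  refine ⟨fun n => u n, fun n => mem_closedBall_zero_iff.1 (u n).2, fun z => ?_⟩
  rw [perturbedSup, ← hu.ciSup' (by fun_prop)]
  exact iSup_range' (fun δ : closedBall (0 : E) ε => f (z + δ)) u

variable [MeasurableSpace E] [BorelSpace E]

lemma measurable_perturbedSup (hf : Continuous f) (hε : 0 ≤ ε) :
    Measurable (perturbedSup f ε) := by
  obtain ⟨e, -, he⟩ := exists_seq_perturbedSup_eq_iSup hf hε
  rw [funext he]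
  exact Measurable.iSup fun n => hf.measurable.comp (measurable_id.add_const _)

lemma exists_measurable_perturbedSup_sub_lt (hf : Continuous f) (hε : 0 ≤ ε) {η : ℝ} (hη : 0 < η) :
    ∃ T : E → E, Measurable T ∧ (∀ z, ‖z - T z‖ ≤ ε) ∧ ∀ z, perturbedSup f ε z - η < f (T z) := by
  classical
  obtain ⟨e, he, hsup⟩ := exists_seq_perturbedSup_eq_iSup hf hε
  have hex : ∀ z, ∃ n, perturbedSup f ε z - η < f (z + e n) := fun z =>
    exists_lt_of_lt_ciSup (by rw [← hsup]; linarith)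
  have hfind : Measurable fun z => Nat.find (hex z) :=
    measurable_find hex fun n => measurableSet_lt
      ((measurable_perturbedSup hf hε).sub_const η) (hf.measurable.comp (measurable_id.add_const _))
  refine ⟨fun z => z + e (Nat.find (hex z)), measurable_id.add (measurable_from_nat.comp hfind),
    fun z => ?_, fun z => Nat.find_spec (hex z)⟩
  rw [sub_add_cancel_left, norm_neg]
  exact he _

end Measurability

section Radius

variable {E : Type*} [NormedAddCommGroup E] [NormedSpace ℝ E] [ProperSpace E] (f : E →ᵇ ℝ)
  {ε : ℝ}

lemma exists_pos_perturbedSup_add_le (hε : 0 ≤ ε) (z : E) {c : ℝ} (hc : 0 < c) :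
    ∃ η > 0, perturbedSup f (ε + η) z ≤ perturbedSup f ε z + c := by
  obtain ⟨ρ, hρ, hfρ⟩ := Metric.uniformContinuousOn_iff.1
    ((isCompact_closedBall z (ε + 1)).uniformContinuousOn_of_continuous f.continuous.continuousOn)
    c hc
  have hη : 0 < min (ρ / 2) 1 := by positivity
  have : Nonempty (closedBall (0 : E) (ε + min (ρ / 2) 1)) :=
    ⟨⟨0, mem_closedBall_self (by positivity)⟩⟩
  refine ⟨_, hη, ciSup_le fun ⟨δ, hδ⟩ => ?_⟩
  have hδρ : δ ∈ thickening ρ (closedBall (0 : E) ε) := by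
    rw [thickening_closedBall hρ hε, mem_ball]
    have := mem_closedBall.1 hδ
    linarith [min_le_left (ρ / 2) 1]
  obtain ⟨δ', hδ', hdist⟩ := mem_thickening_iff.1 hδρ
  have hnear := hfρ (z + δ) ?_ (z + δ') ?_ (by rwa [dist_add_left])
  · rw [Real.dist_eq, abs_lt] at hnear
    linarith [le_perturbedSup f (z := z) (mem_closedBall_zero_iff.1 hδ')]
  · rw [mem_closedBall, dist_self_add_left]
    linarith [mem_closedBall_zero_iff.1 hδ, min_le_right (ρ / 2) 1]
  · rw [mem_closedBall, dist_self_add_left]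
    linarith [mem_closedBall_zero_iff.1 hδ']

lemma tendsto_perturbedSup_nhdsGT (hε : 0 ≤ ε) (z : E) :
    Tendsto (fun r => perturbedSup f r z) (𝓝[>] ε) (𝓝 (perturbedSup f ε z)) := by
  refine tendsto_order.2 ⟨fun a ha => eventually_nhdsWithin_of_forall fun r hr =>
    ha.trans_le (perturbedSup_mono f hε (le_of_lt hr)), fun a ha => ?_⟩
  obtain ⟨η, hη, hle⟩ := exists_pos_perturbedSup_add_le f hε z (half_pos (sub_pos.2 ha))
  filter_upwards [Ioo_mem_nhdsGT (lt_add_of_pos_right ε hη)] with r hr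
  linarith [perturbedSup_mono f (z := z) (hε.trans hr.1.le) hr.2.le]

end Radius

section Coupling

variable {E : Type*} [NormedAddCommGroup E] [MeasurableSpace E] {ε : ℝ}

lemma exists_coupling_of_Winf_lt {P Q : Measure E} (h : Winf P Q < ENNReal.ofReal ε) :
    ∃ π : Measure (E × E), π.map Prod.fst = P ∧ π.map Prod.snd = Q ∧
      ∀ᵐ p ∂π, ‖p.1 - p.2‖ < ε := by
  simp only [Winf, iInf_lt_iff] at h
  obtain ⟨π, ⟨hfst, hsnd⟩, hlt⟩ := h
  refine ⟨π, hfst, hsnd, ?_⟩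
  filter_upwards [ae_lt_of_essSup_lt hlt] with p hp
  rw [← enorm_eq_nnnorm, ← ofReal_norm] at hp
  exact (ENNReal.ofReal_lt_ofReal_iff_of_nonneg (norm_nonneg _)).1 hp

variable [BorelSpace E] [SecondCountableTopology E]

lemma Winf_map_le {P : Measure E} {T : E → E} (hT : Measurable T) (hε : ∀ z, ‖z - T z‖ ≤ ε) :
    Winf P (P.map T) ≤ ENNReal.ofReal ε := by
  have hpair : Measurable fun z => (z, T z) := measurable_id.prodMk hT
  refine iInf₂_le_of_le (P.map fun z => (z, T z)) ⟨?_, ?_⟩ (essSup_le_of_ae_le _ ?_)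
  · rw [Measure.map_map measurable_fst hpair]
    exact Measure.map_id
  · rw [Measure.map_map measurable_snd hpair]
    rfl
  · refine (ae_map_iff hpair.aemeasurable (measurableSet_le (by fun_prop) measurable_const)).2
      (Eventually.of_forall fun z => ?_)
    rw [← enorm_eq_nnnorm, ← ofReal_norm]
    exact ENNReal.ofReal_le_ofReal (hε z)

end Coupling

section Integral

variable {E : Type*} [NormedAddCommGroup E] [MeasurableSpace E] [BorelSpace E] (f : E →ᵇ ℝ)
  {ε : ℝ}

lemma integrable_perturbedSup [SecondCountableTopology E] (μ : Measure E) [IsFiniteMeasure μ]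
    (hε : 0 ≤ ε) : Integrable (perturbedSup f ε) μ :=
  .of_bound (measurable_perturbedSup f.continuous hε).aestronglyMeasurable ‖f‖
    (ae_of_all _ fun _ => (Real.norm_eq_abs _).trans_le (abs_perturbedSup_le f hε))

lemma integral_le_integral_perturbedSup_of_Winf_lt [SecondCountableTopology E] {P Q : Measure E}
    [IsFiniteMeasure P] (hε : 0 ≤ ε) (h : Winf P Q < ENNReal.ofReal ε) :
    ∫ x, f x ∂Q ≤ ∫ z, perturbedSup f ε z ∂P := by
  obtain ⟨π, rfl, rfl, hclose⟩ := exists_coupling_of_Winf_lt h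
  have := Measure.isFiniteMeasure_of_map measurable_fst.aemeasurable (μ := π)
  rw [integral_map measurable_snd.aemeasurable f.continuous.aestronglyMeasurable,
    integral_map measurable_fst.aemeasurable
      (measurable_perturbedSup f.continuous hε).aestronglyMeasurable]
  refine integral_mono_ae ((f.integrable (π.map Prod.snd)).comp_measurable measurable_snd)
    ((integrable_perturbedSup f _ hε).comp_measurable measurable_fst) ?_
  filter_upwards [hclose] with p hp
  simpa using le_perturbedSup f (z := p.1) (δ := p.2 - p.1) (by rw [norm_sub_rev]; exact hp.le)

lemma exists_map_Winf_le_integral_perturbedSup_sub_le [SecondCountableTopology E] (P : Measure E)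
    [IsProbabilityMeasure P] (hε : 0 ≤ ε) {η : ℝ} (hη : 0 < η) :
    ∃ T : E → E, Measurable T ∧ Winf P (P.map T) ≤ ENNReal.ofReal ε ∧
      ∫ z, perturbedSup f ε z ∂P - η ≤ ∫ x, f x ∂(P.map T) := by
  obtain ⟨T, hT, hTclose, hTgood⟩ := exists_measurable_perturbedSup_sub_lt f.continuous hε hη
  refine ⟨T, hT, Winf_map_le hT hTclose, ?_⟩
  rw [integral_map hT.aemeasurable f.continuous.aestronglyMeasurable]
  calc ∫ z, perturbedSup f ε z ∂P - η = ∫ z, (perturbedSup f ε z - η) ∂P := by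
        rw [integral_sub (integrable_perturbedSup f P hε) (integrable_const η), integral_const,
          probReal_univ, one_smul]
    _ ≤ ∫ z, f (T z) ∂P :=
        integral_mono ((integrable_perturbedSup f P hε).sub (integrable_const η))
          ((f.integrable (P.map T)).comp_measurable hT) fun z => (hTgood z).le

variable [NormedSpace ℝ E] [ProperSpace E]

lemma tendsto_integral_perturbedSup_nhdsGT (μ : Measure E) [IsFiniteMeasure μ] (hε : 0 ≤ ε) :
    Tendsto (fun r => ∫ z, perturbedSup f r z ∂μ) (𝓝[>] ε)
      (𝓝 (∫ z, perturbedSup f ε z ∂μ)) := by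
  refine tendsto_integral_filter_of_dominated_convergence (fun _ => ‖f‖) ?_ ?_
    (integrable_const _) (ae_of_all _ (tendsto_perturbedSup_nhdsGT f hε))
  · exact eventually_nhdsWithin_of_forall fun r hr =>
      (measurable_perturbedSup f.continuous (hε.trans (le_of_lt hr))).aestronglyMeasurable
  · exact eventually_nhdsWithin_of_forall fun _ hr => ae_of_all _ fun _ =>
      (Real.norm_eq_abs _).trans_le (abs_perturbedSup_le f (hε.trans (le_of_lt hr)))

lemma integral_le_integral_perturbedSup_of_Winf_le {P Q : Measure E} [IsFiniteMeasure P]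
    (hε : 0 ≤ ε) (h : Winf P Q ≤ ENNReal.ofReal ε) :
    ∫ x, f x ∂Q ≤ ∫ z, perturbedSup f ε z ∂P :=
  ge_of_tendsto (tendsto_integral_perturbedSup_nhdsGT f P hε) <|
    eventually_nhdsWithin_of_forall fun _ hr =>
      integral_le_integral_perturbedSup_of_Winf_lt f (hε.trans (le_of_lt hr))
        (h.trans_lt ((ENNReal.ofReal_lt_ofReal_iff (hε.trans_lt hr)).2 hr))

theorem sSup_integral_Winf_le_eq_integral_perturbedSup (P : Measure E) [IsProbabilityMeasure P]
    (hε : 0 ≤ ε) :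
    sSup {r : ℝ | ∃ P' : Measure E, IsProbabilityMeasure P' ∧
        Winf P P' ≤ ENNReal.ofReal ε ∧ r = ∫ x, f x ∂P'}
      = ∫ z, perturbedSup f ε z ∂P := by
  set S := {r : ℝ | ∃ P' : Measure E, IsProbabilityMeasure P' ∧
    Winf P P' ≤ ENNReal.ofReal ε ∧ r = ∫ x, f x ∂P'}
  have hupper : ∀ r ∈ S, r ≤ ∫ z, perturbedSup f ε z ∂P := by
    rintro _ ⟨P', -, hW, rfl⟩
    exact integral_le_integral_perturbedSup_of_Winf_le f hε hW
  have hlower : ∀ η > 0, ∃ r ∈ S, ∫ z, perturbedSup f ε z ∂P - η ≤ r := fun η hη => by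
    obtain ⟨T, hT, hW, hle⟩ := exists_map_Winf_le_integral_perturbedSup_sub_le f P hε hη
    exact ⟨_, ⟨_, Measure.isProbabilityMeasure_map hT.aemeasurable, hW, rfl⟩, hle⟩
  obtain ⟨r₀, hr₀, -⟩ := hlower 1 one_pos
  refine le_antisymm (csSup_le ⟨r₀, hr₀⟩ hupper) (le_of_forall_pos_le_add fun η hη => ?_)
  obtain ⟨r, hr, hle⟩ := hlower η hη
  linarith [le_csSup ⟨_, hupper⟩ hr]

end Integral

theorem stmt2_general (d d0 : ℕ) (M εz : ℝ) (hεz : 0 ≤ εz)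
    (ℓ : (Fin d0 → ℝ) → ℝ) (hℓc : Continuous ℓ)
    (hℓ0 : ∀ x, 0 ≤ ℓ x) (hℓM : ∀ x, ℓ x ≤ M)
    (ginv : (Fin d → ℝ) → (Fin d0 → ℝ)) (hginv : Continuous ginv)
    (Pz : Measure (Fin d → ℝ)) [IsProbabilityMeasure Pz] :
    sSup {r : ℝ | ∃ P' : Measure (Fin d → ℝ), IsProbabilityMeasure P' ∧
        Winf Pz P' ≤ ENNReal.ofReal εz ∧ r = ∫ z', ℓ (ginv z') ∂P'}
      = ∫ z, sSup {r : ℝ | ∃ δz : Fin d → ℝ, ‖δz‖ ≤ εz ∧ r = ℓ (ginv (z + δz))} ∂Pz := by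
  have hbound (z : Fin d → ℝ) : ‖ℓ (ginv z)‖ ≤ M := by
    rw [Real.norm_of_nonneg (hℓ0 _)]
    exact hℓM _
  simpa only [perturbedSup_eq_sSup, coe_ofNormedAddCommGroup, Function.comp_apply] using
    sSup_integral_Winf_le_eq_integral_perturbedSup
      (.ofNormedAddCommGroup (ℓ ∘ ginv) (hℓc.comp hginv) M hbound) Pz hεz

/-- For a continuous bounded loss `ℓ` (`0 ≤ ℓ ≤ M`), a continuous decoder `g⁻¹`, and a
compactly supported probability distribution `P_z` on the latent space, the supremum over
distributions `P'` within `W_∞`-distance `ε_z` of `P_z` of `E_{z'∼P'}[ℓ(g⁻¹(z'))]` equals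
`E_{z∼P_z}[ sup_{‖δ_z‖_∞ ≤ ε_z} ℓ(g⁻¹(z + δ_z)) ]`. -/
theorem stmt2 (d d0 : ℕ) (M εz : ℝ) (hεz : 0 ≤ εz) (hM : 0 ≤ M)
    (ℓ : (Fin d0 → ℝ) → ℝ) (hℓc : Continuous ℓ)
    (hℓ0 : ∀ x, 0 ≤ ℓ x) (hℓM : ∀ x, ℓ x ≤ M)
    (ginv : (Fin d → ℝ) → (Fin d0 → ℝ)) (hginv : Continuous ginv)
    (Pz : Measure (Fin d → ℝ)) [IsProbabilityMeasure Pz]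
    (K : Set (Fin d → ℝ)) (hK : IsCompact K) (hKsupp : Pz Kᶜ = 0) :
    sSup {r : ℝ | ∃ P' : Measure (Fin d → ℝ), IsProbabilityMeasure P' ∧
        Winf Pz P' ≤ ENNReal.ofReal εz ∧ r = ∫ z', ℓ (ginv z') ∂P'}
      = ∫ z, sSup {r : ℝ | ∃ δz : Fin d → ℝ, ‖δz‖ ≤ εz ∧ r = ℓ (ginv (z + δz))} ∂Pz :=
  stmt2_general d d0 M εz hεz ℓ hℓc hℓ0 hℓM ginv hginv Pz
end

section
/- If a model satisfies the on-manifold robustness bound E_{x∼P_0}[ sup_{‖δ_z‖_∞ ≤ ε_z} |ℓ(θ, g^{-1}(g(x)+δ_z)) − ℓ(θ,x)| ] ≤ τ and the hypothesis of Lemma 1 holds, then the OOD generalization gap satisfies γ(ε,∞) ≤ τ for all ε with induced latent radius at most ε_z, where γ(ε,∞) = | sup_{P∈P(P_0,ε)} E_{x'∼P}[ℓ(θ,x')] − E_{x∼P_0}[ℓ(θ,x)] |. -/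
/-
The robust risk is at least `E_{P₀}[ℓ]` because `P₀` lies in its own `W_∞`-ball. Conversely,
Lemma 1 bounds it by `E_{P₀}[sup_δ ℓ(g⁻¹(g x + δ))]`, and pointwise
`sup_δ ℓ(g⁻¹(g x + δ)) ≤ ℓ x + sup_δ |ℓ(g⁻¹(g x + δ)) − ℓ x|`, whose expectation is at most
`E_{P₀}[ℓ] + τ` by the robustness bound. The latent ball is compact, so these pointwise suprema are
continuous in `x`, hence integrable.
-/

open MeasureTheory ENNReal NNReal

open Set Function

lemma Winf_self {E : Type*} [MeasurableSpace E] [NormedAddCommGroup E]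
    [BorelSpace E] [SecondCountableTopology E] (P : Measure E) : Winf P P = 0 := by
  have hdiag : Measurable (fun x : E => (x, x)) := measurable_id.prodMk measurable_id
  have hfst : (P.map fun x => (x, x)).map Prod.fst = P := by
    rw [Measure.map_map measurable_fst hdiag]; exact Measure.map_id
  have hsnd : (P.map fun x => (x, x)).map Prod.snd = P := by
    rw [Measure.map_map measurable_snd hdiag]; exact Measure.map_id
  refine le_antisymm ((iInf₂_le _ ⟨hfst, hsnd⟩).trans ?_) zero_le
  have hdist : Measurable fun p : E × E => (‖p.1 - p.2‖₊ : ℝ≥0∞) :=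
    (measurable_fst.sub measurable_snd).nnnorm.coe_nnreal_ennreal
  rw [essSup_map_measure hdist.aemeasurable hdiag.aemeasurable]
  simp only [comp_def, sub_self, nnnorm_zero, ENNReal.coe_zero]
  exact essSup_const_bot.le

lemma integral_le_sSup_integral_over_Winf_ball {E : Type*} [MeasurableSpace E] [NormedAddCommGroup E]
    [BorelSpace E] [SecondCountableTopology E] (P₀ : Measure E) [IsProbabilityMeasure P₀] (ε : ℝ)
    {ℓ : E → ℝ} {M : ℝ} (hℓ : ∀ x, |ℓ x| ≤ M) :
    ∫ x, ℓ x ∂P₀ ≤ sSup {r : ℝ | ∃ P : Measure E, IsProbabilityMeasure P ∧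
      Winf P₀ P ≤ ENNReal.ofReal ε ∧ r = ∫ x, ℓ x ∂P} := by
  refine le_csSup ⟨M, ?_⟩ ⟨P₀, inferInstance, by simp [Winf_self], rfl⟩
  rintro r ⟨P, hP, -, rfl⟩
  calc ∫ x, ℓ x ∂P ≤ ‖∫ x, ℓ x ∂P‖ := le_abs_self _
    _ ≤ M * P.real univ := norm_integral_le_of_norm_le_const (ae_of_all _ hℓ)
    _ = M := by simp

lemma setOf_exists_norm_le_eq_image {E α : Type*} [SeminormedAddCommGroup E] (F : E → α) (ε : ℝ) :
    {r | ∃ δ : E, ‖δ‖ ≤ ε ∧ r = F δ} = F '' Metric.closedBall 0 ε := by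
  ext r
  simp [eq_comm]

lemma abs_sSup_image_le {E : Type*} {K : Set E} (hK : K.Nonempty) {f : E → ℝ} {M : ℝ}
    (hf : ∀ δ, |f δ| ≤ M) : |sSup (f '' K)| ≤ M := by
  have hbdd : BddAbove (f '' K) := ⟨M, forall_mem_image.2 fun δ _ => (abs_le.1 (hf δ)).2⟩
  refine abs_le.2 ⟨?_, csSup_le (hK.image f) (forall_mem_image.2 fun δ _ => (abs_le.1 (hf δ)).2)⟩
  obtain ⟨δ, hδ⟩ := hK
  exact (abs_le.1 (hf δ)).1.trans (le_csSup hbdd (mem_image_of_mem f hδ))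

lemma sSup_image_le_add_sSup_image_abs_sub {E : Type*} {K : Set E} (hK : K.Nonempty) {f : E → ℝ}
    (c : ℝ) (hbdd : BddAbove ((fun δ => |f δ - c|) '' K)) :
    sSup (f '' K) ≤ c + sSup ((fun δ => |f δ - c|) '' K) :=
  csSup_le (hK.image f) <| forall_mem_image.2 fun δ hδ => calc
    f δ ≤ c + |f δ - c| := by linarith [le_abs_self (f δ - c)]
    _ ≤ c + sSup ((fun δ => |f δ - c|) '' K) := by gcongr; exact le_csSup hbdd (mem_image_of_mem _ hδ)

lemma integral_sSup_image_le_integral_add_integral_sSup_image_abs_sub {X E : Type*}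
    [TopologicalSpace X] [MeasurableSpace X] [OpensMeasurableSpace X] [TopologicalSpace E]
    (μ : Measure X) [IsFiniteMeasure μ] {K : Set E} (hK : IsCompact K) (hKne : K.Nonempty)
    {F : X → E → ℝ} (hF : Continuous ↿F) {c : X → ℝ} (hc : Continuous c) {M : ℝ}
    (hFM : ∀ x δ, |F x δ| ≤ M) (hcM : ∀ x, |c x| ≤ M) :
    ∫ x, sSup (F x '' K) ∂μ ≤ ∫ x, c x ∂μ + ∫ x, sSup ((fun δ => |F x δ - c x|) '' K) ∂μ := by
  have hG : Continuous ↿fun x δ => |F x δ - c x| := (hF.sub (hc.comp continuous_fst)).abs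
  have hGM : ∀ x δ, |(|F x δ - c x|)| ≤ M + M := fun x δ => by
    rw [abs_abs]; exact (abs_sub _ _).trans (add_le_add (hFM x δ) (hcM x))
  have integrable {f : X → ℝ} (hf : Continuous f) {C : ℝ} (hC : ∀ x, |f x| ≤ C) :
      Integrable f μ :=
    Integrable.of_bound hf.aestronglyMeasurable C (ae_of_all _ hC)
  have hc_int := integrable hc hcM
  have hG_int := integrable (hK.continuous_sSup hG) fun x => abs_sSup_image_le hKne (hGM x)
  rw [← integral_add hc_int hG_int]
  refine integral_mono (integrable (hK.continuous_sSup hF) fun x => abs_sSup_image_le hKne (hFM x))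
    (hc_int.add hG_int) fun x => sSup_image_le_add_sSup_image_abs_sub hKne (c x) ?_
  exact hK.bddAbove_image (hG.comp (Continuous.prodMk_right x)).continuousOn

theorem stmt15_general (d0 d : ℕ) (ε εz τ M : ℝ) (hεz : 0 ≤ εz)
    (g : (Fin d0 → ℝ) → (Fin d → ℝ)) (hg : Continuous g)
    (ginv : (Fin d → ℝ) → (Fin d0 → ℝ)) (hginv : Continuous ginv)
    (ℓ : (Fin d0 → ℝ) → ℝ) (hℓc : Continuous ℓ)
    (hℓ0 : ∀ x, 0 ≤ ℓ x) (hℓM : ∀ x, ℓ x ≤ M)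
    (P0 : Measure (Fin d0 → ℝ)) [IsProbabilityMeasure P0]
    (hrobust : ∫ x, sSup {r : ℝ | ∃ δz : Fin d → ℝ, ‖δz‖ ≤ εz ∧
        r = |ℓ (ginv (g x + δz)) - ℓ x|} ∂P0 ≤ τ)
    (hlemma1 : sSup {r : ℝ | ∃ P : Measure (Fin d0 → ℝ), IsProbabilityMeasure P ∧
          Winf P0 P ≤ ENNReal.ofReal ε ∧ r = ∫ x', ℓ x' ∂P}
        ≤ ∫ x, sSup {r : ℝ | ∃ δz : Fin d → ℝ, ‖δz‖ ≤ εz ∧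
            r = ℓ (ginv (g x + δz))} ∂P0) :
    |sSup {r : ℝ | ∃ P : Measure (Fin d0 → ℝ), IsProbabilityMeasure P ∧
          Winf P0 P ≤ ENNReal.ofReal ε ∧ r = ∫ x', ℓ x' ∂P}
        - ∫ x, ℓ x ∂P0| ≤ τ := by
  have hℓ : ∀ x, |ℓ x| ≤ M := fun x => abs_le.2 ⟨by linarith [hℓ0 x, hℓ0 0, hℓM 0], hℓM x⟩
  have hlower := integral_le_sSup_integral_over_Winf_ball P0 ε hℓ
  have hupper := integral_sSup_image_le_integral_add_integral_sSup_image_abs_sub P0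
    (isCompact_closedBall (0 : Fin d → ℝ) εz) (Metric.nonempty_closedBall.2 hεz)
    (F := fun x δ => ℓ (ginv (g x + δ))) (by fun_prop) hℓc (fun _ _ => hℓ _) hℓ
  simp only [setOf_exists_norm_le_eq_image] at hrobust hlemma1
  rw [abs_of_nonneg (sub_nonneg.2 hlower)]
  linarith

/-- If a model satisfies the on-manifold robustness bound with error `τ` and the
conclusion of Lemma 1 holds, then the OOD generalization gap satisfies
`γ(ε,∞) = |sup_{P∈P(P_0,ε)} E_P[ℓ] − E_{P_0}[ℓ]| ≤ τ`. -/
theorem stmt15 (d0 d : ℕ) (ε εz τ M : ℝ) (hε : 0 ≤ ε) (hεz : 0 ≤ εz)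
    (g : (Fin d0 → ℝ) → (Fin d → ℝ)) (hg : Continuous g)
    (ginv : (Fin d → ℝ) → (Fin d0 → ℝ)) (hginv : Continuous ginv)
    (ℓ : (Fin d0 → ℝ) → ℝ) (hℓc : Continuous ℓ)
    (hℓ0 : ∀ x, 0 ≤ ℓ x) (hℓM : ∀ x, ℓ x ≤ M)
    (hrecon : ∀ x, ℓ (ginv (g x)) = ℓ x)
    (hinduced : ∀ x δx : Fin d0 → ℝ, ‖δx‖ ≤ ε → ‖g x - g (x + δx)‖ ≤ εz)
    (P0 : Measure (Fin d0 → ℝ)) [IsProbabilityMeasure P0]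
    (hrobust : ∫ x, sSup {r : ℝ | ∃ δz : Fin d → ℝ, ‖δz‖ ≤ εz ∧
        r = |ℓ (ginv (g x + δz)) - ℓ x|} ∂P0 ≤ τ)
    (hlemma1 : sSup {r : ℝ | ∃ P : Measure (Fin d0 → ℝ), IsProbabilityMeasure P ∧
          Winf P0 P ≤ ENNReal.ofReal ε ∧ r = ∫ x', ℓ x' ∂P}
        ≤ ∫ x, sSup {r : ℝ | ∃ δz : Fin d → ℝ, ‖δz‖ ≤ εz ∧
            r = ℓ (ginv (g x + δz))} ∂P0) :
    |sSup {r : ℝ | ∃ P : Measure (Fin d0 → ℝ), IsProbabilityMeasure P ∧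
          Winf P0 P ≤ ENNReal.ofReal ε ∧ r = ∫ x', ℓ x' ∂P}
        - ∫ x, ℓ x ∂P0| ≤ τ :=
  stmt15_general d0 d ε εz τ M hεz g hg ginv hginv ℓ hℓc hℓ0 hℓM P0 hrobust hlemma1
end
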